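/- arXiv:2312.07267 — 2 statements merged into one kernel-verified Lean document; each statement's English description precedes it below -/
import Mathlib

section
/- For any partition ν of n, the polynomial identity (X-1)·Σ_{k=0}^{n-1} (-1)^k ξ_{n,k}(ν) X^{n-1-k} = Π_{k=1}^{ℓ(ν)} (X^{ν_k} - 1) holds, where ξ_{n,k} = χ_{(n-k,1,…,1)} is the irreducible character of S_n indexed by the hook partition (n-k,1,…,1) and ξ_{n,k}(ν) denotes its value on any permutation of cycle type ν. -/
namespace SnChar

/-- The `i`-th part (1-indexed) of a partition of `n`, or `0` if out of range. -/
def part {n : ℕ} (ν : n.Partition) (i : ℕ) : ℕ :=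
  ((ν.parts.sort (· ≤ ·)).reverse).getD (i - 1) 0

/-- The `j`-th part (1-indexed) of the conjugate partition: the number of parts `≥ j`. -/
def conj {n : ℕ} (ν : n.Partition) (j : ℕ) : ℕ :=
  (ν.parts.filter (fun p => j ≤ p)).card

/-- Durfee square size: the largest `i ≥ 1` with `λ_i ≥ i` (0 for the empty partition). -/
def durfee {n : ℕ} (ν : n.Partition) : ℕ :=
  (((Finset.Icc 1 n)).filter (fun i => i ≤ part ν i)).sup id

/-- Hook length at the box `(i,j)` (1-indexed): `(λ_i - j) + (λ'_j - i) + 1`. -/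
def hookLen {n : ℕ} (ν : n.Partition) (i j : ℕ) : ℕ :=
  (part ν i - j) + (conj ν j - i) + 1

/-- The set of boxes of the Young diagram, 1-indexed. -/
def isBox {n : ℕ} (ν : n.Partition) (i j : ℕ) : Prop :=
  1 ≤ i ∧ 1 ≤ j ∧ j ≤ part ν i

/-- The hook at box `(i,j)`, as a finite set of boxes. -/
def hookCells {n : ℕ} (ν : n.Partition) (i j : ℕ) : Finset (ℕ × ℕ) :=
  ((Finset.Icc j (part ν i)).image (fun u => (i, u))) ∪
    ((Finset.Icc i (conj ν j)).image (fun v => (v, j)))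

/-- The sum of the contents `v - u` over the boxes `(u,v)` of `λ` with `u,v ≥ k`. -/
def contentSumFrom {n : ℕ} (ν : n.Partition) (k : ℕ) : ℤ :=
  ∑ p ∈ (Finset.Icc 1 n ×ˢ Finset.Icc 1 n).filter
      (fun p => k ≤ p.1 ∧ k ≤ p.2 ∧ p.2 ≤ part ν p.1), ((p.2 : ℤ) - (p.1 : ℤ))

/-- The partition `(1,1,…,1)` of `n`. -/
def onesPart (n : ℕ) : n.Partition :=
  ⟨Multiset.replicate n 1, by
    intro i hi
    have := Multiset.eq_of_mem_replicate hi
    omega, by simp⟩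

/-- The hook partition `(n-k,1,…,1)` of `n` (junk value `(1,…,1)` if `k ≥ n`). -/
def hookPart (n k : ℕ) : n.Partition :=
  if h : k < n then
    ⟨(n - k) ::ₘ Multiset.replicate k 1, by
      intro i hi
      rcases Multiset.mem_cons.mp hi with h1 | h1
      · omega
      · have := Multiset.eq_of_mem_replicate h1; omega, by
      simp [Multiset.sum_cons, Multiset.sum_replicate]; omega⟩
  else onesPart n

/-- The value `χ_λ(μ)` of the irreducible character of `S_n` indexed by the partition `λ`
on the conjugacy class of cycle type `μ`, defined by Frobenius's formula: it is the
coefficient of `x^(λ+δ)` in `(∏_{i<j} (x_i - x_j)) · p_μ`, where `δ = (n-1,…,1,0)`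
and `p_μ` is the product of the power sums of the parts of `μ`. -/
noncomputable def charValue {n : ℕ} (lam mu : n.Partition) : ℤ :=
  MvPolynomial.coeff
    (Finsupp.equivFunOnFinite.symm fun i : Fin n => part lam ((i : ℕ) + 1) + (n - 1 - (i : ℕ)))
    ((∏ p ∈ Finset.univ.filter (fun p : Fin n × Fin n => p.1 < p.2),
        (MvPolynomial.X p.1 - MvPolynomial.X p.2)) *
      (mu.parts.map fun m => ∑ i : Fin n, (MvPolynomial.X i : MvPolynomial (Fin n) ℤ) ^ m).prod)

/-- The cycle type of a permutation of `Fin n`, as a partition of `n`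
(cycle lengths together with a part `1` for each fixed point). -/
def permPartition {n : ℕ} (g : Equiv.Perm (Fin n)) : n.Partition :=
  (Fintype.card_fin n) ▸ g.partition

end SnChar

/-!
By Frobenius' formula, `χ_λ(ν)` is the coefficient of `x^(λ + δ)` in `a_δ · p_ν`, where
`a_δ = ∏_{i<j} (x_i - x_j)` is alternating and `p_ν` is symmetric, so these coefficients are
alternating functions of the exponent vector. For the hook `λ = (r - k, 1^k)` the vector `λ + δ` is
`δ` with its entry `n - 1 - k` raised by `r`. Multiplying by a power sum `p_m` lowers one entry by
`m`, and every choice but two creates a repeated entry: the survivors lower the raised entry, or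
move the entry `n - 1 - k + m` down into the gap past `m - 1` others. This is the Murnaghan–Nakayama rule
`ξ_k(m ∪ s) = ξ_k(s) + (-1)^(m-1) ξ_(k-m)(s)`, i.e. `R_(m ∪ s) = (1 - T^m) R_s` for the series
`R_s = Σ_k (-1)^k ξ_k(s) T^k`; nothing is lost by truncating at `T^n`, since `ξ_k(s) = 0` for
`0 < |s| ≤ k`. Together with `(1 - T) R_(m) = 1 - T^m` this gives `(1 - T) R_ν = ∏ (1 - T^(ν_i))`,
and the theorem is the reversal of this identity.
-/

namespace SnChar

variable {n : ℕ}

section Alternant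

open MvPolynomial Equiv Finset

noncomputable def vandermondeProd (n : ℕ) : MvPolynomial (Fin n) ℤ :=
  ∏ p ∈ univ.filter (fun p : Fin n × Fin n => p.1 < p.2), (X p.1 - X p.2)

noncomputable def powerSumProd (n : ℕ) (s : Multiset ℕ) : MvPolynomial (Fin n) ℤ :=
  (s.map fun m => ∑ i : Fin n, (X i : MvPolynomial (Fin n) ℤ) ^ m).prod

/-- `charValue λ μ` is `altCoeff μ.parts (λ + δ)`. -/
noncomputable def altCoeff (s : Multiset ℕ) (E : Fin n → ℕ) : ℤ :=
  coeff (Finsupp.equivFunOnFinite.symm E) (vandermondeProd n * powerSumProd n s)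

section Lex

open scoped MonomialOrder

lemma lex_degree_X_lt {R : Type*} [CommSemiring R] [Nontrivial R] {i j : Fin n} (h : i < j) :
    MonomialOrder.lex.degree (X j : MvPolynomial (Fin n) R) ≺[MonomialOrder.lex]
      MonomialOrder.lex.degree (X i : MvPolynomial (Fin n) R) := by
  rw [MonomialOrder.degree_X, MonomialOrder.degree_X, MonomialOrder.lex_lt_iff]
  exact Finsupp.Lex.single_lt_iff.2 h

/-- The lexicographic leading monomial of `∏_{i<j} (x_i - x_j)` is `∏_{i<j} x_i = x^δ`. -/
lemma coeff_vandermondeProd_delta :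
    coeff (Finsupp.equivFunOnFinite.symm fun i : Fin n => n - 1 - i) (vandermondeProd n) = 1 := by
  have hdelta : Finsupp.equivFunOnFinite.symm (fun i : Fin n => n - 1 - i) =
      ∑ p ∈ univ.filter (fun p : Fin n × Fin n => p.1 < p.2),
        MonomialOrder.lex.degree (X p.1 - X p.2 : MvPolynomial (Fin n) ℤ) := by
    rw [sum_congr rfl fun p hp => by
      rw [MonomialOrder.degree_sub_of_lt (lex_degree_X_lt (mem_filter.1 hp).2),
        MonomialOrder.degree_X]]
    ext i
    have hfiber : {p ∈ univ.filter (fun p : Fin n × Fin n => p.1 < p.2) | p.1 = i} =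
        (Ioi i).image (Prod.mk i) := by
      ext ⟨a, b⟩
      simp only [mem_filter, mem_univ, true_and, mem_image, mem_Ioi, Prod.mk.injEq]
      aesop
    simp [Finsupp.finsetSum_apply, Finsupp.single_apply, hfiber,
      card_image_of_injective _ (Prod.mk_right_injective i)]
  rw [vandermondeProd, hdelta, MonomialOrder.coeff_prod_sum_degree]
  refine prod_eq_one fun p hp => ?_
  rw [MonomialOrder.leadingCoeff_sub_of_lt (lex_degree_X_lt (mem_filter.1 hp).2),
    MonomialOrder.leadingCoeff_X]

end Lex

lemma vandermondeProd_eq_det :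
    vandermondeProd n =
      (Matrix.vandermonde fun i : Fin n => (X i.rev : MvPolynomial (Fin n) ℤ)).det := by
  rw [Matrix.det_vandermonde, ← prod_finset_product'
    (univ.filter fun p : Fin n × Fin n => p.1 < p.2) univ (fun i => Ioi i) (by simp),
    vandermondeProd]
  exact prod_nbij' (fun p => (p.2.rev, p.1.rev)) (fun p => (p.2.rev, p.1.rev))
    (by simp) (by simp) (by simp) (by simp) (by simp)

lemma rename_vandermondeProd (σ : Perm (Fin n)) :
    rename σ (vandermondeProd n) = (Perm.sign σ : ℤ) • vandermondeProd n := by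
  have hrows :
      ((rename σ : MvPolynomial (Fin n) ℤ →ₐ[ℤ] _) : MvPolynomial (Fin n) ℤ →+* _).mapMatrix
        (Matrix.vandermonde fun i : Fin n => X i.rev) =
      (Matrix.vandermonde fun i : Fin n => (X i.rev : MvPolynomial (Fin n) ℤ)).submatrix
        ((Fin.revPerm.symm.trans σ).trans Fin.revPerm) id := by
    ext i j
    simp [Matrix.vandermonde]
  rw [vandermondeProd_eq_det, ← AlgHom.coe_toRingHom, RingHom.map_det, hrows,
    Matrix.det_permute, Perm.sign_symm_trans_trans, zsmul_eq_mul]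

lemma rename_powerSumProd (σ : Perm (Fin n)) (s : Multiset ℕ) :
    rename σ (powerSumProd n s) = powerSumProd n s := by
  simp only [powerSumProd, map_multiset_prod, Multiset.map_map, Function.comp_def, map_sum,
    map_pow, rename_X]
  congr 1
  exact Multiset.map_congr rfl fun m _ =>
    Equiv.sum_comp σ fun i => (X i : MvPolynomial (Fin n) ℤ) ^ m

lemma altCoeff_comp_perm (s : Multiset ℕ) (σ : Perm (Fin n)) (E : Fin n → ℕ) :
    altCoeff s (E ∘ σ) = Perm.sign σ * altCoeff s E := by
  have hmap : Finsupp.mapDomain σ (Finsupp.equivFunOnFinite.symm (E ∘ σ)) =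
      Finsupp.equivFunOnFinite.symm E := by
    ext j
    simp [Finsupp.mapDomain_equiv_apply]
  rw [altCoeff, altCoeff, ← coeff_rename_mapDomain σ σ.injective, hmap, map_mul,
    rename_vandermondeProd, rename_powerSumProd, smul_mul_assoc, coeff_smul, smul_eq_mul]

lemma altCoeff_eq_sign_mul_comp (s : Multiset ℕ) (σ : Perm (Fin n)) (E : Fin n → ℕ) :
    altCoeff s E = Perm.sign σ * altCoeff s (E ∘ σ) := by
  rw [altCoeff_comp_perm, ← mul_assoc, ← Units.val_mul, Int.units_mul_self, Units.val_one,
    one_mul]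

lemma altCoeff_eq_zero_of_eq (s : Multiset ℕ) {E : Fin n → ℕ} {a b : Fin n} (hab : a ≠ b)
    (h : E a = E b) : altCoeff s E = 0 := by
  have hswap : E ∘ swap a b = E := by
    ext j
    rcases eq_or_ne j a with rfl | hja
    · simp [h]
    rcases eq_or_ne j b with rfl | hjb
    · simp [h]
    · simp [swap_apply_of_ne_of_ne hja hjb]
  have := altCoeff_comp_perm s (swap a b) E
  rw [hswap, Perm.sign_swap hab, Units.val_neg, Units.val_one, neg_one_mul] at this
  omega

lemma altCoeff_zero_delta : altCoeff 0 (fun i : Fin n => n - 1 - i) = 1 := by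
  rw [altCoeff, powerSumProd, Multiset.map_zero, Multiset.prod_zero, mul_one,
    coeff_vandermondeProd_delta]

lemma altCoeff_cons (m : ℕ) (s : Multiset ℕ) (E : Fin n → ℕ) :
    altCoeff (m ::ₘ s) E =
      ∑ i, if m ≤ E i then altCoeff s (Function.update E i (E i - m)) else 0 := by
  have hprod : vandermondeProd n * powerSumProd n (m ::ₘ s) =
      ∑ i, vandermondeProd n * powerSumProd n s * monomial (Finsupp.single i m) 1 := by
    simp only [powerSumProd, Multiset.map_cons, Multiset.prod_cons, ← X_pow_eq_monomial,
      sum_mul, mul_sum]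
    exact sum_congr rfl fun i _ => by ring
  rw [altCoeff, hprod, coeff_sum]
  refine sum_congr rfl fun i _ => ?_
  simp only [coeff_mul_monomial', mul_one, Finsupp.single_le_iff]
  congr 2
  ext j
  rcases eq_or_ne j i with rfl | hji <;> simp [*]

end Alternant

open Fin in
lemma val_cycleIcc {i j : Fin n} (hij : i ≤ j) (x : Fin n) :
    (cycleIcc i j x : ℕ) =
      if i ≤ x ∧ x < j then (x : ℕ) + 1 else if x = j then (i : ℕ) else x := by
  have : NeZero n := NeZero.of_pos x.pos
  rcases lt_or_ge x i with hxi | hix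
  · simp [cycleIcc_of_lt hxi, hxi.not_ge, (hxi.trans_le hij).ne]
  rcases lt_or_ge j x with hjx | hxj
  · simp [cycleIcc_of_gt hjx, hjx.not_gt, hjx.ne']
  rcases hxj.lt_or_eq with hxj | rfl
  · rw [cycleIcc_of_ge_of_lt hix hxj, if_pos ⟨hix, hxj⟩, val_add_one_of_lt']
    have := j.isLt
    rw [Fin.lt_def] at hxj
    omega
  · simp [cycleIcc_of_last hij]

/-- `λ + δ` for the hook `λ = (r - k, 1^k)`, where `δ = (n - 1, …, 1, 0)`: this is `δ` with its
entry `n - 1 - k` raised by `r`. -/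
def hookExp (n r k : ℕ) (i : Fin n) : ℕ :=
  if (i : ℕ) = 0 then r + (n - 1 - k) else if (i : ℕ) ≤ k then n - i else n - 1 - i

noncomputable def hookCoeff (n k : ℕ) (s : Multiset ℕ) : ℤ :=
  altCoeff s (hookExp n s.sum k)

lemma hookCoeff_zero {k : ℕ} (hk : k < n) : hookCoeff n k 0 = (-1) ^ k := by
  have h0k : (⟨0, by omega⟩ : Fin n) ≤ ⟨k, hk⟩ := Nat.zero_le k
  have hcycle : hookExp n 0 k ∘ Fin.cycleIcc ⟨0, by omega⟩ ⟨k, hk⟩ =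
      fun i : Fin n => n - 1 - i := by
    ext x
    simp only [Function.comp_apply, hookExp, val_cycleIcc h0k, Fin.le_def, Fin.lt_def,
      Fin.ext_iff]
    grind
  rw [hookCoeff, Multiset.sum_zero, altCoeff_eq_sign_mul_comp 0 (Fin.cycleIcc _ _), hcycle,
    altCoeff_zero_delta, Fin.sign_cycleIcc_of_le h0k]
  simp

lemma hookCoeff_eq_zero {k : ℕ} {s : Multiset ℕ} (hk : k < n) (hs : 1 ≤ s.sum)
    (hsk : s.sum ≤ k) : hookCoeff n k s = 0 :=
  altCoeff_eq_zero_of_eq s (a := ⟨0, by omega⟩) (b := ⟨k + 1 - s.sum, by omega⟩)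
    (by simp [Fin.ext_iff]; omega) (by simp only [hookExp]; split_ifs <;> omega)

section HookRecursion

open Finset

variable {k m r : ℕ}

lemma update_hookExp_zero (h0 : 0 < n) :
    Function.update (hookExp n (m + r) k) ⟨0, h0⟩ (hookExp n (m + r) k ⟨0, h0⟩ - m) =
      hookExp n r k := by
  ext j
  rcases eq_or_ne j ⟨0, h0⟩ with rfl | hj
  · simp only [Function.update_self, hookExp, if_true]
    omega
  · have hj0 : (j : ℕ) ≠ 0 := fun h => hj (Fin.ext h)
    simp [Function.update_of_ne hj, hookExp, hj0]

lemma update_hookExp_comp_cycleIcc (hk : k < n) (hm : 1 ≤ m) (hmk : m ≤ k) {i : Fin n}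
    (hi : (i : ℕ) + m = k + 1) :
    Function.update (hookExp n (m + r) k) i (hookExp n (m + r) k i - m) ∘
        Fin.cycleIcc i ⟨k, hk⟩ =
      hookExp n r (k - m) := by
  have hik : i ≤ ⟨k, hk⟩ := show (i : ℕ) ≤ k by omega
  ext x
  simp only [Function.comp_apply, Function.update_apply, Fin.ext_iff, val_cycleIcc hik, hookExp,
    Fin.le_def, Fin.lt_def]
  grind

lemma altCoeff_update_hookExp_of_add_eq (s : Multiset ℕ) (hk : k < n) (hm : 1 ≤ m)
    (hmk : m ≤ k) {i : Fin n} (hi : (i : ℕ) + m = k + 1) :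
    altCoeff s (Function.update (hookExp n (m + r) k) i (hookExp n (m + r) k i - m)) =
      (-1) ^ (m - 1) * altCoeff s (hookExp n r (k - m)) := by
  have hik : i ≤ ⟨k, hk⟩ := show (i : ℕ) ≤ k by omega
  have hlen : (⟨k, hk⟩ : Fin n).val - i.val = m - 1 := show k - i = m - 1 by omega
  rw [altCoeff_eq_sign_mul_comp s (Fin.cycleIcc i ⟨k, hk⟩),
    update_hookExp_comp_cycleIcc hk hm hmk hi, Fin.sign_cycleIcc_of_le hik, hlen]
  simp

lemma altCoeff_update_hookExp_eq_zero (s : Multiset ℕ) (hk : k < n) (hm : 1 ≤ m) {i : Fin n}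
    (hi0 : (i : ℕ) ≠ 0) (hik : (i : ℕ) + m ≠ k + 1) (hmi : m ≤ hookExp n (m + r) k i) :
    altCoeff s (Function.update (hookExp n (m + r) k) i (hookExp n (m + r) k i - m)) = 0 := by
  have hi := i.isLt
  simp only [hookExp, hi0, if_false] at hmi
  obtain ⟨j, hj, hji⟩ : ∃ j : ℕ, ∃ hj : j < n, j ≠ i ∧
      hookExp n (m + r) k ⟨j, hj⟩ = hookExp n (m + r) k i - m := by
    by_cases hcase : (i : ℕ) + m ≤ k ∨ k < i
    · refine ⟨i + m, by split_ifs at hmi <;> omega, by omega, ?_⟩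
      simp only [hookExp, hi0]
      grind
    · refine ⟨i + m - 1, by split_ifs at hmi <;> omega, by omega, ?_⟩
      simp only [hookExp, hi0]
      grind
  refine altCoeff_eq_zero_of_eq s (a := ⟨j, hj⟩) (b := i) (by simpa [Fin.ext_iff] using hji.1) ?_
  simp only [Function.update_apply, Fin.ext_iff, hji.1, if_false, if_true, hji.2]

/-- The Murnaghan–Nakayama rule for hooks: removing an `m`-rim hook shortens either the arm or
the leg (the latter with height `m - 1`). -/
lemma hookCoeff_cons (hk : k < n) (hm : 1 ≤ m) (s : Multiset ℕ) :
    hookCoeff n k (m ::ₘ s) =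
      hookCoeff n k s + if m ≤ k then (-1) ^ (m - 1) * hookCoeff n (k - m) s else 0 := by
  set E := hookExp n (m + s.sum) k
  have h0 : 0 < n := by omega
  have hterm0 : (if m ≤ E ⟨0, h0⟩ then altCoeff s (Function.update E ⟨0, h0⟩ (E ⟨0, h0⟩ - m))
      else 0) = hookCoeff n k s := by
    rw [if_pos (by simp only [E, hookExp, if_true]; omega), update_hookExp_zero, hookCoeff]
  have hrest : ∀ i : Fin n, (i : ℕ) ≠ 0 → (i : ℕ) + m ≠ k + 1 →
      (if m ≤ E i then altCoeff s (Function.update E i (E i - m)) else 0) = 0 :=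
    fun i hi0 hik => ite_eq_right_iff.2 (altCoeff_update_hookExp_eq_zero s hk hm hi0 hik)
  rw [hookCoeff, Multiset.sum_cons, altCoeff_cons]
  split_ifs with hmk
  · set i : Fin n := ⟨k + 1 - m, by omega⟩
    have hi : (i : ℕ) + m = k + 1 := show k + 1 - m + m = k + 1 by omega
    have hterm : (if m ≤ E i then altCoeff s (Function.update E i (E i - m)) else 0) =
        (-1) ^ (m - 1) * hookCoeff n (k - m) s := by
      rw [if_pos (show m ≤ E i by simp only [E, hookExp, i]; grind),
        altCoeff_update_hookExp_of_add_eq s hk hm hmk hi, hookCoeff]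
    rw [sum_eq_add_of_mem ⟨0, h0⟩ i (mem_univ _) (mem_univ _) (by simp [i, Fin.ext_iff]; omega)
      (fun j _ hj => hrest j (fun h => hj.1 (Fin.ext h)) fun h => hj.2 (Fin.ext (by omega))),
      hterm0, hterm]
  · refine (sum_eq_single ⟨0, h0⟩ (fun j _ hj => ?_) (by simp)).trans (by rw [hterm0, add_zero])
    have hj0 : (j : ℕ) ≠ 0 := fun h => hj (Fin.ext h)
    exact hrest j hj0 (by omega)

end HookRecursion

lemma sort_hookPart {k : ℕ} (hk : k < n) :
    (hookPart n k).parts.sort (· ≤ ·) = List.replicate k 1 ++ [n - k] := by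
  have hparts : (hookPart n k).parts = ((List.replicate k 1 ++ [n - k] : List ℕ) : Multiset ℕ) := by
    rw [hookPart, dif_pos hk]
    show (n - k) ::ₘ Multiset.replicate k 1 = _
    rw [← Multiset.coe_add, ← Multiset.coe_replicate, add_comm]
    rfl
  rw [hparts, Multiset.coe_sort, List.mergeSort_eq_self]
  simp [List.pairwise_append, List.pairwise_replicate]
  omega

lemma part_hookPart {k : ℕ} (hk : k < n) (i : ℕ) :
    part (hookPart n k) (i + 1) = if i = 0 then n - k else if i ≤ k then 1 else 0 := by
  rw [part, sort_hookPart hk, List.reverse_append, List.reverse_replicate, Nat.add_sub_cancel]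
  rcases i with _ | i
  · simp
  · simp only [List.reverse_singleton, List.singleton_append, List.getD_cons_succ,
      Nat.add_one_ne_zero, if_false]
    split_ifs with h
    · exact List.getD_replicate (x := 1) (by omega)
    · exact List.getD_eq_default _ _ (by simp; omega)

lemma charValue_hookPart {k : ℕ} (hk : k < n) (ν : n.Partition) :
    charValue (hookPart n k) ν = hookCoeff n k ν.parts := by
  have hexp : (fun i : Fin n => part (hookPart n k) (i + 1) + (n - 1 - i)) =
      hookExp n ν.parts.sum k := by
    ext i
    rw [part_hookPart hk, ν.parts_sum, hookExp]
    have := i.isLt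
    split_ifs <;> omega
  exact congrArg (altCoeff ν.parts) hexp

section Series

open Polynomial Finset

lemma neg_one_pow_mul_neg_one_pow_sub_one {R : Type*} [Ring R] {j m : ℕ} (hm : 1 ≤ m)
    (hmj : m ≤ j) : (-1 : R) ^ j * (-1) ^ (m - 1) = -(-1) ^ (j - m) := by
  rw [← pow_add, show j + (m - 1) = j - m + 2 * (m - 1) + 1 by omega, pow_add, pow_add, pow_mul]
  simp

lemma reflect_sum {R ι : Type*} [Semiring R] (N : ℕ) (s : Finset ι) (f : ι → R[X]) :
    reflect N (∑ i ∈ s, f i) = ∑ i ∈ s, reflect N (f i) :=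
  map_sum (⟨⟨reflect N, reflect_zero⟩, fun f g => reflect_add f g N⟩ : R[X] →+ R[X]) f s

lemma natDegree_one_sub_X_pow_le {R : Type*} [Ring R] (p : ℕ) :
    (1 - X ^ p : R[X]).natDegree ≤ p :=
  (natDegree_sub_le _ _).trans (max_le (by simp) (natDegree_X_pow_le p))

lemma reflect_one_sub_X_pow {R : Type*} [Ring R] (p : ℕ) :
    reflect p (1 - X ^ p : R[X]) = X ^ p - 1 := by
  simp [reflect_sub, reflect_monomial]

lemma reflect_prod_one_sub_X_pow {R : Type*} [CommRing R] (s : Multiset ℕ) :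
    reflect s.sum (s.map fun p => (1 - X ^ p : R[X])).prod =
      (s.map fun p => X ^ p - 1).prod := by
  induction s using Multiset.induction_on with
  | empty => simp
  | cons m t ih =>
    have hdeg : (t.map fun p => (1 - X ^ p : R[X])).prod.natDegree ≤ t.sum := by
      refine (natDegree_multiset_prod_le _).trans ?_
      rw [Multiset.map_map]
      simpa using Multiset.sum_map_le_sum_map _ _ fun p _ => natDegree_one_sub_X_pow_le p
    rw [Multiset.sum_cons, Multiset.map_cons, Multiset.prod_cons, Multiset.map_cons,
      Multiset.prod_cons, reflect_mul _ _ (natDegree_one_sub_X_pow_le m) hdeg,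
      reflect_one_sub_X_pow, ih]

/-- The series `R_s`, with `ξ_k(s) = hookCoeff n k s`; its reversal is the sum in the theorem. -/
noncomputable def hookSeries (n : ℕ) (s : Multiset ℕ) : ℤ[X] :=
  ∑ k ∈ range n, C ((-1) ^ k * hookCoeff n k s) * X ^ k

lemma coeff_hookSeries (s : Multiset ℕ) (j : ℕ) :
    (hookSeries n s).coeff j = if j < n then (-1) ^ j * hookCoeff n j s else 0 := by
  simp only [hookSeries, finsetSum_coeff, coeff_C_mul_X_pow, sum_ite_eq, mem_range]

lemma natDegree_hookSeries_le (s : Multiset ℕ) : (hookSeries n s).natDegree ≤ n - 1 :=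
  natDegree_sum_le_of_forall_le _ _ fun k hk =>
    (natDegree_C_mul_X_pow_le _ k).trans (by have := mem_range.1 hk; omega)

lemma hookSeries_singleton {m : ℕ} (hm : 1 ≤ m) (hmn : m ≤ n) :
    hookSeries n {m} = ∑ k ∈ range m, X ^ k := by
  ext j
  rw [coeff_hookSeries, finsetSum_coeff]
  simp only [coeff_X_pow, sum_ite_eq, mem_range]
  split_ifs with hjn hjm hjm
  · rw [← Multiset.cons_zero, hookCoeff_cons hjn hm, hookCoeff_zero hjn, if_neg (by omega),
      add_zero, ← mul_pow]
    simp
  · rw [← Multiset.cons_zero, hookCoeff_cons hjn hm, hookCoeff_zero hjn, if_pos (by omega),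
      hookCoeff_zero (by omega), mul_add, ← mul_assoc,
      neg_one_pow_mul_neg_one_pow_sub_one hm (by omega), neg_mul, ← mul_pow, ← mul_pow]
    simp
  · omega
  · rfl

lemma hookSeries_cons {m : ℕ} {s : Multiset ℕ} (hm : 1 ≤ m) (hs : 1 ≤ s.sum)
    (hmn : m + s.sum ≤ n) : hookSeries n (m ::ₘ s) = (1 - X ^ m) * hookSeries n s := by
  ext j
  rw [sub_mul, one_mul, coeff_sub, coeff_X_pow_mul', coeff_hookSeries, coeff_hookSeries,
    coeff_hookSeries]
  by_cases hjn : j < n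
  · rw [if_pos hjn, if_pos hjn, hookCoeff_cons hjn hm, mul_add]
    by_cases hmj : m ≤ j
    · rw [if_pos hmj, if_pos hmj, if_pos (by omega), ← mul_assoc,
        neg_one_pow_mul_neg_one_pow_sub_one hm hmj]
      ring
    · rw [if_neg hmj, if_neg hmj]
      simp
  · rw [if_neg hjn, if_neg hjn]
    by_cases hmj : m ≤ j
    · rw [if_pos hmj]
      split_ifs with hjm
      · rw [hookCoeff_eq_zero hjm hs (by omega)]
        simp
      · simp
    · rw [if_neg hmj]
      simp

lemma one_sub_X_mul_hookSeries {s : Multiset ℕ} (hs : s ≠ 0) (hpos : ∀ p ∈ s, 1 ≤ p)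
    (hsn : s.sum ≤ n) : (1 - X) * hookSeries n s = (s.map fun p => 1 - X ^ p).prod := by
  induction s using Multiset.induction_on with
  | empty => exact absurd rfl hs
  | cons m t ih =>
    have hm := hpos m (Multiset.mem_cons_self m t)
    have htpos : ∀ p ∈ t, 1 ≤ p := fun p hp => hpos p (Multiset.mem_cons_of_mem hp)
    rw [Multiset.sum_cons] at hsn
    rw [Multiset.map_cons, Multiset.prod_cons]
    rcases eq_or_ne t 0 with rfl | ht
    · rw [Multiset.cons_zero, hookSeries_singleton hm (by simpa using hsn), mul_neg_geom_sum]
      simp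
    · obtain ⟨p, hp⟩ := Multiset.exists_mem_of_ne_zero ht
      have ht1 : 1 ≤ t.sum := (htpos p hp).trans (Multiset.le_sum_of_mem hp)
      rw [hookSeries_cons hm ht1 hsn, mul_left_comm, ih ht htpos (by omega)]

lemma reflect_hookSeries (s : Multiset ℕ) :
    reflect (n - 1) (hookSeries n s) =
      ∑ k ∈ range n, (-1 : ℤ[X]) ^ k * C (hookCoeff n k s) * X ^ (n - 1 - k) := by
  rw [hookSeries, reflect_sum]
  refine sum_congr rfl fun k hk => ?_
  rw [reflect_C_mul_X_pow, revAt_le (show k ≤ n - 1 by have := mem_range.1 hk; omega)]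
  simp

end Series

end SnChar

open SnChar Polynomial in
/-- `(X-1)·Σ_{k=0}^{n-1} (-1)^k ξ_{n,k}(ν) X^{n-1-k} = Π_k (X^{ν_k} - 1)`. -/
theorem stmt4 (n : ℕ) (hn : 1 ≤ n) (ν : n.Partition) :
    (X - 1) * ∑ k ∈ Finset.range n,
        ((-1 : Polynomial ℤ) ^ k * C (charValue (hookPart n k) ν) * X ^ (n - 1 - k)) =
      (ν.parts.map fun p => (X : Polynomial ℤ) ^ p - 1).prod := by
  have hsum : ν.parts.sum = n := ν.parts_sum
  have hν : ν.parts ≠ 0 := fun h => by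
    rw [h, Multiset.sum_zero] at hsum
    omega
  calc (X - 1) * ∑ k ∈ Finset.range n,
        ((-1 : Polynomial ℤ) ^ k * C (charValue (hookPart n k) ν) * X ^ (n - 1 - k))
      = reflect 1 (1 - X) * reflect (n - 1) (hookSeries n ν.parts) := by
        rw [reflect_hookSeries, show reflect 1 (1 - X : ℤ[X]) = X - 1 by simp]
        congr 1
        exact Finset.sum_congr rfl fun k hk => by rw [charValue_hookPart (Finset.mem_range.1 hk)]
    _ = reflect n ((1 - X) * hookSeries n ν.parts) := by
        rw [← reflect_mul _ _ (by simpa using natDegree_one_sub_X_pow_le (R := ℤ) 1)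
          (natDegree_hookSeries_le _), Nat.add_sub_cancel' hn]
    _ = reflect ν.parts.sum (ν.parts.map fun p => (1 - X ^ p : ℤ[X])).prod := by
        rw [one_sub_X_mul_hookSeries hν (fun p hp => ν.parts_pos hp) hsum.le, hsum]
    _ = _ := reflect_prod_one_sub_X_pow ν.parts
end

section
/- If λ is a partition of n with Durfee square size k, then the Murnaghan–Nakayama expansion with respect to the cycle type (h_1, h_2, …, h_k) of principal hook lengths gives |χ_λ((h_1,…,h_k))| = 1; moreover, for any m with h_1 < m ≤ n, the value χ_λ on cycle type (m, 1, 1, …, 1) is 0. -/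
/-!
By Frobenius's formula, `χ_λ(μ)` is the coefficient of `x^β` in `a_δ · p_μ`, where
`β = λ + δ` is the β-set (the beads of the abacus) of `λ`. Multiplying by `p_m` moves one bead
`m` places down, and a coefficient whose exponent has a repeated entry vanishes because `a_δ` is
alternating; so only moves from a bead to a gap count. Remove the principal hooks in order: at
step `t` the top remaining bead `λ_t + n - t` lands on the gap `n - 1 + t - λ'_t`, while every
other bead lands on a bead, since all positions below that gap are occupied. After `k` steps the
β-set is `{0, …, n-1}`, whose coefficient in `a_δ` is `±1`. If `m > h_1`, already the first move
of every bead lands on a bead, so `χ_λ(m,1,…,1) = 0`.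
-/

theorem List.le_getD_iff_lt_length_filter {l : List ℕ} (hl : l.Pairwise (· ≥ ·)) {j : ℕ}
    (hj : 0 < j) (t : ℕ) : j ≤ l.getD t 0 ↔ t < (l.filter (j ≤ ·)).length := by
  induction l generalizing t with
  | nil => simp; omega
  | cons a l ih =>
    obtain ⟨ha, hl⟩ := List.pairwise_cons.mp hl
    by_cases hja : j ≤ a
    · cases t with
      | zero => simp [hja]
      | succ t =>
        rw [List.getD_cons_succ, List.filter_cons_of_pos (by simpa), List.length_cons, ih hl t]
        omega
    · have hnil : l.filter (j ≤ ·) = [] :=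
        List.filter_eq_nil_iff.mpr fun b hb => by have := ha b hb; simp; omega
      have hget : (a :: l).getD t 0 ≤ a := by
        rcases lt_or_ge t (a :: l).length with ht | ht
        · rw [List.getD_eq_getElem _ _ ht]
          rcases List.mem_cons.mp (List.getElem_mem ht) with h | h
          exacts [h.le, ha _ h]
        · rw [List.getD_eq_default _ _ ht]; omega
      rw [List.filter_cons_of_neg (by simpa using hja), hnil, List.length_nil]
      omega

theorem List.sum_range_getD (l : List ℕ) {N : ℕ} (hN : l.length ≤ N) :
    ∑ i ∈ Finset.range N, l.getD i 0 = l.sum := by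
  induction l generalizing N with
  | nil => simp
  | cons a l ih =>
    cases N with
    | zero => simp at hN
    | succ N =>
      simp only [Finset.sum_range_succ', List.getD_cons_succ, List.getD_cons_zero, List.sum_cons,
        ih (Nat.le_of_succ_le_succ hN), add_comm]

namespace Function.Injective

theorem update_of_notMem_range {α : Type*} [DecidableEq α] {β : α → ℕ} (hβ : Injective β)
    (a : α) {c : ℕ} (hc : c ∉ Set.range β) : Injective (update β a c) := by
  intro x y hxy
  by_cases hx : x = a <;> by_cases hy : y = a <;>
    simp_all [Function.update_of_ne, hβ.eq_iff, eq_comm (a := c)]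

theorem range_update {α : Type*} [DecidableEq α] {β : α → ℕ} (hβ : Injective β)
    (a : α) (c : ℕ) : Set.range (update β a c) = insert c (Set.range β \ {β a}) := by
  ext x
  simp only [Set.mem_range, Set.mem_insert_iff, Set.mem_sdiff, Set.mem_singleton_iff]
  constructor
  · rintro ⟨y, rfl⟩
    rcases eq_or_ne y a with rfl | hy
    · simp
    · simp [Function.update_of_ne hy, hβ.ne hy]
  · rintro (rfl | ⟨⟨y, rfl⟩, hy⟩)
    · exact ⟨a, Function.update_self ..⟩
    · exact ⟨y, Function.update_of_ne (fun h => hy (congrArg β h)) ..⟩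

end Function.Injective

namespace SnChar

open Finset Function

section FrobeniusCoefficient

open MvPolynomial

variable {n : ℕ}

noncomputable def alternant (n : ℕ) : MvPolynomial (Fin n) ℤ :=
  ∏ p ∈ univ.filter (fun p : Fin n × Fin n => p.1 < p.2), (X p.1 - X p.2)

noncomputable def frobeniusCoeff (β : Fin n → ℕ) (μ : Multiset ℕ) : ℤ :=
  coeff (Finsupp.equivFunOnFinite.symm β) (alternant n * (μ.map (psum (Fin n) ℤ)).prod)

/-- The Murnaghan–Nakayama rule on the abacus: multiplying by `p_m` moves one bead `m` down. -/
theorem frobeniusCoeff_cons (β : Fin n → ℕ) (m : ℕ) (μ : Multiset ℕ) :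
    frobeniusCoeff β (m ::ₘ μ) =
      ∑ i, if m ≤ β i then frobeniusCoeff (update β i (β i - m)) μ else 0 := by
  rw [frobeniusCoeff, Multiset.map_cons, Multiset.prod_cons, mul_left_comm, psum,
    Finset.sum_mul, coeff_sum]
  refine Finset.sum_congr rfl fun i _ => ?_
  rw [X_pow_eq_monomial, coeff_monomial_mul', one_mul]
  by_cases h : m ≤ β i
  · rw [if_pos (Finsupp.single_le_iff.mpr h), if_pos h, frobeniusCoeff]
    congr 2
    ext x
    rcases eq_or_ne x i with rfl | hx <;> simp [update_of_ne, *]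
  · rw [if_neg (fun hc => h (Finsupp.single_le_iff.mp hc)), if_neg h]

theorem alternant_eq_det :
    alternant n = (-1) ^ #(univ.filter fun p : Fin n × Fin n => p.1 < p.2) *
      (Matrix.vandermonde fun i : Fin n => (X i : MvPolynomial (Fin n) ℤ)).det := by
  have hpairs : ∏ p ∈ univ.sigma fun i : Fin n => Ioi i, (X p.2 - X p.1) =
      ∏ p ∈ univ.filter (fun p : Fin n × Fin n => p.1 < p.2),
        (X p.2 - X p.1 : MvPolynomial (Fin n) ℤ) :=
    prod_nbij' (fun p => (p.1, p.2)) (fun p => ⟨p.1, p.2⟩) (by simp) (by simp) (by simp)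
      (by simp) (by simp)
  rw [Matrix.det_vandermonde, prod_sigma', hpairs, ← prod_const, ← prod_mul_distrib]
  exact prod_congr rfl fun _ _ => by ring

theorem rename_swap_alternant {i j : Fin n} (hij : i ≠ j) :
    rename (Equiv.swap i j) (alternant n) = -alternant n := by
  have hV : (Matrix.vandermonde fun k : Fin n => (X k : MvPolynomial (Fin n) ℤ)).map
        (rename (Equiv.swap i j)) =
      (Matrix.vandermonde fun k => X k).submatrix (Equiv.swap i j) id := by
    ext a b
    simp [Matrix.vandermonde]
  rw [alternant_eq_det, map_mul, map_pow, map_neg, map_one, AlgHom.map_det,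
    AlgHom.mapMatrix_apply, hV, Matrix.det_permute, Equiv.Perm.sign_swap hij]
  simp

theorem frobeniusCoeff_comp_swap (β : Fin n → ℕ) (μ : Multiset ℕ) {i j : Fin n}
    (hij : i ≠ j) : frobeniusCoeff (β ∘ Equiv.swap i j) μ = -frobeniusCoeff β μ := by
  have hsymm : rename (Equiv.swap i j) ((μ.map (psum (Fin n) ℤ)).prod) =
      (μ.map (psum (Fin n) ℤ)).prod := by
    simp [map_multiset_prod, Multiset.map_map]
  have h := coeff_rename_mapDomain (Equiv.swap i j) (Equiv.injective _)
    (alternant n * (μ.map (psum (Fin n) ℤ)).prod)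
    (Finsupp.equivFunOnFinite.symm (β ∘ Equiv.swap i j))
  have hd : Finsupp.mapDomain (Equiv.swap i j)
      (Finsupp.equivFunOnFinite.symm (β ∘ Equiv.swap i j)) =
        Finsupp.equivFunOnFinite.symm β := by
    ext x
    rw [← Finsupp.equivMapDomain_eq_mapDomain, Finsupp.equivMapDomain_apply]
    simp
  rw [map_mul, rename_swap_alternant hij, hsymm, hd, neg_mul, coeff_neg] at h
  rw [frobeniusCoeff, ← h]
  rfl

theorem frobeniusCoeff_eq_zero_of_apply_eq (β : Fin n → ℕ) (μ : Multiset ℕ) {i j : Fin n}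
    (hij : i ≠ j) (h : β i = β j) : frobeniusCoeff β μ = 0 := by
  have hβ : β ∘ Equiv.swap i j = β := by
    funext x
    simp only [comp_apply, Equiv.swap_apply_def]
    split_ifs <;> simp_all
  have := frobeniusCoeff_comp_swap β μ hij
  rw [hβ] at this
  omega

theorem abs_frobeniusCoeff_comp_perm (β : Fin n → ℕ) (μ : Multiset ℕ) (σ : Equiv.Perm (Fin n)) :
    |frobeniusCoeff (β ∘ σ) μ| = |frobeniusCoeff β μ| := by
  induction σ using Equiv.Perm.swap_induction_on generalizing β with
  | one => rfl
  | swap_mul f x y hxy ih =>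
    rw [Equiv.Perm.coe_mul, ← comp_assoc, ih, frobeniusCoeff_comp_swap β μ hxy, abs_neg]

theorem abs_frobeniusCoeff_congr_range (μ : Multiset ℕ) {β γ : Fin n → ℕ}
    (hβ : Injective β) (h : Set.range β = Set.range γ) :
    |frobeniusCoeff β μ| = |frobeniusCoeff γ μ| := by
  choose σ hσ using fun i => h ▸ Set.mem_range_self (f := β) i
  have hσinj : Injective σ := fun a b hab => hβ (by rw [← hσ a, ← hσ b, hab])
  have hβγ : β = γ ∘ Equiv.ofBijective σ hσinj.bijective_of_finite :=
    funext fun i => (hσ i).symm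
  rw [hβγ, abs_frobeniusCoeff_comp_perm]

theorem coeff_det_vandermonde_X :
    coeff (Finsupp.equivFunOnFinite.symm fun i : Fin n => (i : ℕ))
      (Matrix.vandermonde fun i : Fin n => (X i : MvPolynomial (Fin n) ℤ)).det = 1 := by
  have hterm : ∀ σ : Equiv.Perm (Fin n),
      ∏ k, Matrix.vandermonde (fun i : Fin n => (X i : MvPolynomial (Fin n) ℤ)) (σ k) k =
        monomial (∑ k, Finsupp.single (σ k) (k : ℕ)) 1 := fun σ => by
    simp [monomial_sum_one, X_pow_eq_monomial]
  have hexp : ∀ σ : Equiv.Perm (Fin n), ∀ x,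
      (∑ k, Finsupp.single (σ k) (k : ℕ)) (σ x) = x := fun σ x => by
    simp [Finsupp.finsetSum_apply, Finsupp.single_apply, σ.injective.eq_iff]
  have hexp_eq : ∀ σ : Equiv.Perm (Fin n),
      (∑ k, Finsupp.single (σ k) (k : ℕ)) =
        Finsupp.equivFunOnFinite.symm (fun i : Fin n => (i : ℕ)) ↔ σ = 1 := by
    intro σ
    constructor
    · intro h
      ext x
      simpa [hexp] using (DFunLike.congr_fun h (σ x)).symm
    · rintro rfl
      ext x
      simpa using hexp 1 x
  rw [Matrix.det_apply, coeff_sum, sum_eq_single 1]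
  · rw [hterm, coeff_smul, coeff_monomial, if_pos ((hexp_eq 1).mpr rfl)]
    simp
  · intro σ _ hσ
    rw [hterm, coeff_smul, coeff_monomial, if_neg (mt (hexp_eq σ).mp hσ), smul_zero]
  · simp

theorem abs_frobeniusCoeff_zero {β : Fin n → ℕ} (hβ : Injective β)
    (h : Set.range β = Set.Iio n) : |frobeniusCoeff β 0| = 1 := by
  rw [abs_frobeniusCoeff_congr_range 0 hβ (h.trans Fin.range_val.symm), frobeniusCoeff,
    Multiset.map_zero, Multiset.prod_zero, mul_one, alternant_eq_det, ← C_1, ← C_neg, ← C_pow,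
    coeff_C_mul, coeff_det_vandermonde_X]
  simp

section MurnaghanNakayamaStep

variable {β : Fin n → ℕ} {m : ℕ} (μ : Multiset ℕ)

theorem frobeniusCoeff_update_sub_eq_zero (hm : 0 < m) {i : Fin n} (hi : m ≤ β i)
    (h : β i - m ∈ Set.range β) : frobeniusCoeff (update β i (β i - m)) μ = 0 := by
  obtain ⟨j, hj⟩ := h
  have hji : j ≠ i := by rintro rfl; omega
  refine frobeniusCoeff_eq_zero_of_apply_eq _ μ hji.symm ?_
  rw [update_self, update_of_ne hji, hj]

theorem frobeniusCoeff_cons_eq_zero (hm : 0 < m)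
    (h : ∀ i, m ≤ β i → β i - m ∈ Set.range β) : frobeniusCoeff β (m ::ₘ μ) = 0 := by
  rw [frobeniusCoeff_cons]
  refine sum_eq_zero fun i _ => ?_
  split_ifs with hi
  exacts [frobeniusCoeff_update_sub_eq_zero μ hm hi (h i hi), rfl]

theorem frobeniusCoeff_cons_eq_update (hm : 0 < m) {i₀ : Fin n} (hi₀ : m ≤ β i₀)
    (h : ∀ i ≠ i₀, m ≤ β i → β i - m ∈ Set.range β) :
    frobeniusCoeff β (m ::ₘ μ) = frobeniusCoeff (update β i₀ (β i₀ - m)) μ := by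
  rw [frobeniusCoeff_cons, sum_eq_single_of_mem i₀ (mem_univ _), if_pos hi₀]
  intro i _ hi
  split_ifs with him
  exacts [frobeniusCoeff_update_sub_eq_zero μ hm him (h i hi him), rfl]

end MurnaghanNakayamaStep

end FrobeniusCoefficient

section Partition

variable {n : ℕ} (lam : n.Partition)

theorem part_eq_getD (i : ℕ) :
    part lam i = ((lam.parts.sort (· ≤ ·)).reverse).getD (i - 1) 0 := rfl

theorem conj_eq_length_filter (j : ℕ) :
    conj lam j = (((lam.parts.sort (· ≤ ·)).reverse).filter (j ≤ ·)).length := by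
  rw [conj, ← Multiset.coe_card, ← Multiset.filter_coe, Multiset.coe_reverse, Multiset.sort_eq]

theorem le_part_iff_le_conj {i j : ℕ} (hi : 1 ≤ i) (hj : 1 ≤ j) :
    j ≤ part lam i ↔ i ≤ conj lam j := by
  rw [part_eq_getD, conj_eq_length_filter, List.le_getD_iff_lt_length_filter
    (List.pairwise_reverse.mpr (Multiset.pairwise_sort lam.parts (· ≤ ·))) hj]
  omega

theorem part_anti {i i' : ℕ} (hi : 1 ≤ i) (h : i ≤ i') : part lam i' ≤ part lam i := by
  rcases Nat.eq_zero_or_pos (part lam i') with h0 | h0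
  · omega
  · exact (le_part_iff_le_conj lam hi h0).mpr
      (h.trans ((le_part_iff_le_conj lam (hi.trans h) h0).mp le_rfl))

theorem conj_anti {j j' : ℕ} (h : j ≤ j') : conj lam j' ≤ conj lam j :=
  Multiset.card_le_card (Multiset.monotone_filter_right _ fun _ ha => h.trans ha)

theorem card_parts_le : Multiset.card lam.parts ≤ n := by
  simpa [lam.parts_sum] using Multiset.card_nsmul_le_sum fun _ hx => lam.parts_pos hx

theorem conj_le (j : ℕ) : conj lam j ≤ n :=
  (Multiset.card_le_card (Multiset.filter_le _ _)).trans (card_parts_le lam)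

theorem conj_eq_zero_of_part_one_lt {j : ℕ} (hj : part lam 1 < j) : conj lam j = 0 := by
  by_contra h
  have := (le_part_iff_le_conj lam le_rfl (by omega)).mpr (Nat.one_le_iff_ne_zero.mpr h)
  omega

theorem coe_reverse_sort_parts :
    ((lam.parts.sort (· ≤ ·)).reverse : Multiset ℕ) = lam.parts := by
  rw [Multiset.coe_reverse, Multiset.sort_eq]

theorem part_le (i : ℕ) : part lam i ≤ n := by
  rw [part_eq_getD]
  rcases lt_or_ge (i - 1) (lam.parts.sort (· ≤ ·)).reverse.length with h | h
  · rw [List.getD_eq_getElem _ _ h]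
    exact Nat.Partition.le_of_mem_parts
      ((Multiset.mem_sort _).mp (List.mem_reverse.mp (List.getElem_mem h)))
  · rw [List.getD_eq_default _ _ h]
    exact Nat.zero_le n

theorem sum_range_part : ∑ i ∈ range n, part lam (i + 1) = n := by
  calc ∑ i ∈ range n, part lam (i + 1)
      = ((lam.parts.sort (· ≤ ·)).reverse : Multiset ℕ).sum := by
        rw [Multiset.sum_coe, ← List.sum_range_getD _ (N := n)]
        · rfl
        · rw [← Multiset.coe_card, coe_reverse_sort_parts]
          exact card_parts_le lam
    _ = n := by rw [coe_reverse_sort_parts, lam.parts_sum]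

theorem durfee_le : durfee lam ≤ n :=
  Finset.sup_le fun _ hi => (Finset.mem_Icc.mp (Finset.mem_filter.mp hi).1).2

theorem le_part_of_le_durfee {i : ℕ} (hi : 1 ≤ i) (hik : i ≤ durfee lam) : i ≤ part lam i := by
  have hne : ((Icc 1 n).filter fun i => i ≤ part lam i).Nonempty := by
    by_contra h
    rw [not_nonempty_iff_eq_empty] at h
    simp [durfee, h] at hik
    omega
  obtain ⟨k, hk, hk_eq⟩ := exists_mem_eq_sup _ hne id
  have hk' : durfee lam = k := hk_eq
  simp only [mem_filter, mem_Icc] at hk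
  calc i ≤ k := hk' ▸ hik
    _ ≤ part lam k := hk.2
    _ ≤ part lam i := part_anti lam hi (hk' ▸ hik)

theorem le_conj_of_le_durfee {i : ℕ} (hi : 1 ≤ i) (hik : i ≤ durfee lam) : i ≤ conj lam i :=
  (le_part_iff_le_conj lam hi hi).mp (le_part_of_le_durfee lam hi hik)

theorem part_lt_of_durfee_lt {i : ℕ} (hki : durfee lam < i) : part lam i < i := by
  by_contra! h
  rcases le_or_gt i n with hin | hin
  · have : i ≤ durfee lam :=
      le_sup (f := id) (mem_filter.mpr ⟨mem_Icc.mpr ⟨by omega, hin⟩, h⟩)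
    omega
  · have := part_le lam i
    omega

theorem conj_lt_of_durfee_lt {i : ℕ} (hki : durfee lam < i) : conj lam i < i := by
  by_contra! h
  have := (le_part_iff_le_conj lam (by omega) (by omega)).mpr h
  have := part_lt_of_durfee_lt lam hki
  omega

/- Indices are 0-based here: the beads `betaNum i = λ_{i+1} + n - 1 - i` (`i < n`) are the exponents
of Frobenius's formula, and the gaps `gapNum j = n + j - λ'_{j+1}` are the remaining positions
(`exists_betaNum_or_gapNum`). -/
def betaNum (i : ℕ) : ℕ := part lam (i + 1) + (n - 1 - i)

def gapNum (j : ℕ) : ℕ := n + j - conj lam (j + 1)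

theorem betaNum_strictAntiOn : StrictAntiOn (betaNum lam) (Set.Iio n) := by
  intro i hi i' hi' h
  have := part_anti lam (i := i + 1) (i' := i' + 1) (by omega) (by omega)
  simp only [Set.mem_Iio] at hi hi'
  unfold betaNum
  omega

theorem gapNum_strictMono : StrictMono (gapNum lam) := by
  intro j j' h
  have := conj_anti lam (j := j + 1) (j' := j' + 1) (by omega)
  have := conj_le lam (j + 1)
  unfold gapNum
  omega

theorem betaNum_ne_gapNum {i : ℕ} (hi : i < n) (j : ℕ) : betaNum lam i ≠ gapNum lam j := by
  have := le_part_iff_le_conj lam (i := i + 1) (j := j + 1) (by omega) (by omega)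
  have := conj_le lam (j + 1)
  unfold betaNum gapNum
  omega

theorem exists_betaNum_or_gapNum (x : ℕ) :
    (∃ i < n, betaNum lam i = x) ∨ ∃ j, gapNum lam j = x := by
  rcases le_or_gt (n + part lam 1) x with hx | hx
  · refine Or.inr ⟨x - n, ?_⟩
    have := conj_eq_zero_of_part_one_lt lam (j := x - n + 1) (by omega)
    unfold gapNum
    omega
  have hbeads : (range n).image (betaNum lam) ⊆ range (n + part lam 1) := by
    intro y hy
    obtain ⟨i, hi, rfl⟩ := mem_image.mp hy
    have := part_anti lam (i := 1) (i' := i + 1) le_rfl (by omega)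
    simp only [mem_range, betaNum] at hi ⊢
    omega
  have hgaps : (range (part lam 1)).image (gapNum lam) ⊆ range (n + part lam 1) := by
    intro y hy
    obtain ⟨j, hj, rfl⟩ := mem_image.mp hy
    simp only [mem_range, gapNum] at hj ⊢
    omega
  -- below `n + λ_1` there are `n` beads and `λ_1` gaps, all distinct
  have hdisj :
      Disjoint ((range n).image (betaNum lam)) ((range (part lam 1)).image (gapNum lam)) := by
    simp only [disjoint_left, mem_image, mem_range, not_exists, not_and]
    rintro _ ⟨i, hi, rfl⟩ j - hj
    exact betaNum_ne_gapNum lam hi j hj.symm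
  have hunion : (range n).image (betaNum lam) ∪ (range (part lam 1)).image (gapNum lam) =
      range (n + part lam 1) := by
    refine eq_of_subset_of_card_le (union_subset hbeads hgaps) ?_
    rw [card_union_of_disjoint hdisj,
      card_image_of_injOn (coe_range n ▸ (betaNum_strictAntiOn lam).injOn),
      card_image_of_injective _ (gapNum_strictMono lam).injective, card_range, card_range,
      card_range]
  have hxmem : x ∈ range (n + part lam 1) := mem_range.mpr hx
  rw [← hunion, mem_union, mem_image, mem_image] at hxmem
  rcases hxmem with ⟨i, hi, hix⟩ | ⟨j, -, hjx⟩
  exacts [Or.inl ⟨i, mem_range.mp hi, hix⟩, Or.inr ⟨j, hjx⟩]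

section PrincipalHooks

variable {lam} {t : ℕ}

theorem betaNum_eq_gapNum_add_hookLen (ht : t < durfee lam) :
    betaNum lam t = gapNum lam t + hookLen lam (t + 1) (t + 1) := by
  have := le_part_of_le_durfee lam (i := t + 1) (by omega) ht
  have := le_conj_of_le_durfee lam (i := t + 1) (by omega) ht
  have := conj_le lam (t + 1)
  unfold betaNum gapNum hookLen
  omega

theorem le_betaNum_of_lt_durfee {i : ℕ} (hi : i < durfee lam) : n ≤ betaNum lam i := by
  have := le_part_of_le_durfee lam (i := i + 1) (by omega) hi
  unfold betaNum
  omega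

theorem betaNum_lt_of_durfee_le {i : ℕ} (hi : durfee lam ≤ i) (hin : i < n) :
    betaNum lam i < n := by
  have := part_lt_of_durfee_lt lam (i := i + 1) (by omega)
  unfold betaNum
  omega

theorem gapNum_lt_of_lt_durfee {j : ℕ} (hj : j < durfee lam) : gapNum lam j < n := by
  have := le_conj_of_le_durfee lam (i := j + 1) (by omega) hj
  have := conj_le lam (j + 1)
  unfold gapNum
  omega

theorem le_gapNum_durfee : n ≤ gapNum lam (durfee lam) := by
  have := conj_lt_of_durfee_lt lam (i := durfee lam + 1) (by omega)
  unfold gapNum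
  omega

/-- The β-set of `λ` after removing its first `t` principal hooks: removing the `(t+1)`-st one
moves the bead `betaNum t` down to the gap `gapNum t`. -/
def betaAfter (lam : n.Partition) (t : ℕ) : Finset ℕ :=
  (range t).image (gapNum lam) ∪ (Ico t n).image (betaNum lam)

theorem mem_betaAfter {x : ℕ} : x ∈ betaAfter lam t ↔
    (∃ j < t, gapNum lam j = x) ∨ ∃ i, t ≤ i ∧ i < n ∧ betaNum lam i = x := by
  simp [betaAfter, and_assoc]

theorem coe_betaAfter_zero :
    (betaAfter lam 0 : Set ℕ) = Set.range fun i : Fin n => betaNum lam i := by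
  ext x
  simp [mem_betaAfter, Fin.exists_iff]

theorem betaNum_mem_betaAfter (ht : t < n) : betaNum lam t ∈ betaAfter lam t :=
  mem_betaAfter.mpr (Or.inr ⟨t, le_rfl, ht, rfl⟩)

theorem gapNum_notMem_betaAfter : gapNum lam t ∉ betaAfter lam t := by
  intro hx
  rcases mem_betaAfter.mp hx with ⟨j, hj, hjt⟩ | ⟨i, -, hi, hit⟩
  · exact (gapNum_strictMono lam hj).ne hjt
  · exact betaNum_ne_gapNum lam hi t hit

theorem betaAfter_succ (ht : t < n) :
    betaAfter lam (t + 1) = insert (gapNum lam t) ((betaAfter lam t).erase (betaNum lam t)) := by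
  ext x
  rw [mem_insert, mem_erase, mem_betaAfter, mem_betaAfter]
  constructor
  · rintro (⟨j, hj, rfl⟩ | ⟨i, hi, hin, rfl⟩)
    · rcases Nat.lt_succ_iff_lt_or_eq.mp hj with hj | rfl
      · exact Or.inr ⟨(betaNum_ne_gapNum lam ht j).symm, Or.inl ⟨j, hj, rfl⟩⟩
      · exact Or.inl rfl
    · exact Or.inr ⟨((betaNum_strictAntiOn lam) ht hin (by omega)).ne,
        Or.inr ⟨i, by omega, hin, rfl⟩⟩
  · rintro (rfl | ⟨hne, ⟨j, hj, rfl⟩ | ⟨i, hi, hin, rfl⟩⟩)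
    · exact Or.inl ⟨t, by omega, rfl⟩
    · exact Or.inl ⟨j, by omega, rfl⟩
    · exact Or.inr ⟨i, lt_of_le_of_ne hi (by rintro rfl; exact hne rfl), hin, rfl⟩

theorem le_betaNum_of_mem_betaAfter (ht : t < durfee lam) {x : ℕ}
    (hx : x ∈ betaAfter lam t) : x ≤ betaNum lam t := by
  rcases mem_betaAfter.mp hx with ⟨j, hj, rfl⟩ | ⟨i, hi, hin, rfl⟩
  · exact (gapNum_lt_of_lt_durfee (hj.trans ht)).le.trans (le_betaNum_of_lt_durfee ht)
  · exact (betaNum_strictAntiOn lam).antitoneOn (by simp; omega) hin hi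

theorem mem_betaAfter_of_lt (ht : t ≤ durfee lam) {x : ℕ} (hxn : x < n)
    (hxt : x < gapNum lam t) : x ∈ betaAfter lam t := by
  refine mem_betaAfter.mpr ?_
  rcases exists_betaNum_or_gapNum lam x with ⟨i, hin, rfl⟩ | ⟨j, rfl⟩
  · refine Or.inr ⟨i, ?_, hin, rfl⟩
    by_contra! hit
    exact absurd (le_betaNum_of_lt_durfee (hit.trans_le ht)) (by omega)
  · exact Or.inl ⟨j, (gapNum_strictMono lam).lt_iff_lt.mp hxt, rfl⟩

theorem betaAfter_durfee : betaAfter lam (durfee lam) = range n := by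
  ext x
  rw [mem_range]
  refine ⟨fun hx => ?_, fun hx => mem_betaAfter_of_lt le_rfl hx (hx.trans_le le_gapNum_durfee)⟩
  rcases mem_betaAfter.mp hx with ⟨j, hj, rfl⟩ | ⟨i, hi, hin, rfl⟩
  exacts [gapNum_lt_of_lt_durfee hj, betaNum_lt_of_durfee_le hi hin]

theorem sum_betaAfter_zero : ∑ x ∈ betaAfter lam 0, x = n + ∑ i ∈ range n, i := by
  rw [betaAfter, range_zero, image_empty, empty_union, Nat.Ico_zero_eq_range,
    sum_image (coe_range n ▸ (betaNum_strictAntiOn lam).injOn)]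
  simp only [betaNum, sum_add_distrib, sum_range_part]
  rw [sum_range_reflect (fun i => i) n]

theorem sum_betaAfter_succ (ht : t < durfee lam) : ∑ x ∈ betaAfter lam t, x =
    ∑ x ∈ betaAfter lam (t + 1), x + hookLen lam (t + 1) (t + 1) := by
  have htn : t < n := ht.trans_le (durfee_le lam)
  rw [betaAfter_succ htn, sum_insert (fun h => gapNum_notMem_betaAfter (mem_of_mem_erase h)),
    ← add_sum_erase _ _ (betaNum_mem_betaAfter htn), betaNum_eq_gapNum_add_hookLen ht]
  ring

end PrincipalHooks

end Partition

section MainResult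

variable {n : ℕ} {lam : n.Partition}

def principalHooksFrom (lam : n.Partition) (t : ℕ) : Multiset ℕ :=
  (Icc t (durfee lam)).val.map fun i => hookLen lam i i

theorem principalHooksFrom_durfee_add_one : principalHooksFrom lam (durfee lam + 1) = 0 := by
  simp [principalHooksFrom]

theorem principalHooksFrom_eq_cons {t : ℕ} (ht : t < durfee lam) :
    principalHooksFrom lam (t + 1) =
      hookLen lam (t + 1) (t + 1) ::ₘ principalHooksFrom lam (t + 2) := by
  rw [principalHooksFrom, Icc_eq_cons_Ioc (by omega), cons_val, Multiset.map_cons,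
    ← Icc_add_one_left_eq_Ioc, principalHooksFrom]
  rfl

theorem sum_betaAfter_eq {t : ℕ} (ht : t ≤ durfee lam) :
    ∑ x ∈ betaAfter lam t, x = (principalHooksFrom lam (t + 1)).sum + ∑ i ∈ range n, i := by
  induction ht using Nat.decreasingInduction with
  | self =>
    rw [betaAfter_durfee, principalHooksFrom_durfee_add_one, Multiset.sum_zero, zero_add]
  | of_succ t ht ih =>
    rw [sum_betaAfter_succ ht, ih, principalHooksFrom_eq_cons ht, Multiset.sum_cons]
    ring

theorem sum_principalHooks : (principalHooksFrom lam 1).sum = n := by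
  have := sum_betaAfter_eq (lam := lam) (Nat.zero_le _)
  rw [sum_betaAfter_zero, zero_add] at this
  omega

theorem durfee_pos (hn : 0 < n) : 0 < durfee lam := by
  by_contra! h
  have := sum_principalHooks (lam := lam)
  simp_all [principalHooksFrom]

theorem abs_frobeniusCoeff_principalHooksFrom {t : ℕ} (ht : t ≤ durfee lam) {β : Fin n → ℕ}
    (hβ : Injective β) (hrange : Set.range β = betaAfter lam t) :
    |frobeniusCoeff β (principalHooksFrom lam (t + 1))| = 1 := by
  induction ht using Nat.decreasingInduction generalizing β with
  | self =>
    rw [principalHooksFrom_durfee_add_one]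
    exact abs_frobeniusCoeff_zero hβ (by rw [hrange, betaAfter_durfee, coe_range])
  | of_succ t ht ih =>
    have htn : t < n := ht.trans_le (durfee_le lam)
    obtain ⟨i₀, hi₀⟩ : betaNum lam t ∈ Set.range β := by
      rw [hrange]; exact betaNum_mem_betaAfter htn
    have hbead := betaNum_eq_gapNum_add_hookLen ht
    have hmove : β i₀ - hookLen lam (t + 1) (t + 1) = gapNum lam t := by omega
    rw [principalHooksFrom_eq_cons ht, frobeniusCoeff_cons_eq_update _ (by simp [hookLen])
      (i₀ := i₀) (by omega) ?others, hmove]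
    case others =>
      -- every other bead lies below `betaNum t`, so it moves below the gap `gapNum t`
      intro i hi hhi
      have hmem : β i ∈ betaAfter lam t := by
        rw [← Finset.mem_coe, ← hrange]; exact ⟨i, rfl⟩
      have hlt : β i < betaNum lam t :=
        lt_of_le_of_ne (le_betaNum_of_mem_betaAfter ht hmem) (hi₀ ▸ hβ.ne hi)
      have := gapNum_lt_of_lt_durfee ht
      rw [hrange]
      exact mem_betaAfter_of_lt ht.le (by omega) (by omega)
    refine ih (hβ.update_of_notMem_range i₀ ?_) ?_
    · rw [hrange]; exact gapNum_notMem_betaAfter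
    · rw [hβ.range_update, hrange, hi₀, betaAfter_succ htn, coe_insert, coe_erase]

theorem frobeniusCoeff_cons_eq_zero_of_hookLen_lt {m : ℕ} (hm : hookLen lam 1 1 < m)
    (hmn : m ≤ n) (μ : Multiset ℕ) :
    frobeniusCoeff (fun i : Fin n => betaNum lam i) (m ::ₘ μ) = 0 := by
  have hk := durfee_pos (lam := lam) (by simp [hookLen] at hm; omega)
  have hrange := (coe_betaAfter_zero (lam := lam)).symm
  refine frobeniusCoeff_cons_eq_zero μ (by omega) fun i hi => ?_
  have hmem : betaNum lam i ∈ betaAfter lam 0 := by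
    rw [← Finset.mem_coe, ← hrange]; exact ⟨i, rfl⟩
  have := le_betaNum_of_mem_betaAfter hk hmem
  have : betaNum lam 0 = gapNum lam 0 + hookLen lam 1 1 := betaNum_eq_gapNum_add_hookLen hk
  have := gapNum_lt_of_lt_durfee hk
  rw [hrange]
  exact mem_betaAfter_of_lt (Nat.zero_le _) (by omega) (by omega)

theorem charValue_eq_frobeniusCoeff (mu : n.Partition) :
    charValue lam mu = frobeniusCoeff (fun i : Fin n => betaNum lam i) mu.parts :=
  rfl

end MainResult

end SnChar

open SnChar in
/-- `|χ_λ| = 1` on the cycle type given by the principal hook lengths of `λ`,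
and `χ_λ` vanishes on cycle type `(m,1,…,1)` whenever `h_1(λ) < m ≤ n`. -/
theorem stmt18 (n : ℕ) (lam : n.Partition) :
    (∃ ν : n.Partition,
        ν.parts = (Finset.Icc 1 (durfee lam)).val.map (fun i => hookLen lam i i) ∧
          |charValue lam ν| = 1) ∧
      ∀ (m : ℕ) (hm1 : hookLen lam 1 1 < m) (hm2 : m ≤ n),
        charValue lam ⟨m ::ₘ Multiset.replicate (n - m) 1, by
          intro x hx
          rcases Multiset.mem_cons.mp hx with h1 | h1
          · omega
          · have := Multiset.eq_of_mem_replicate h1; omega, by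
          have h2' : m ≤ n := hm2
          simp [Multiset.sum_cons, Multiset.sum_replicate]
          omega⟩ = 0 := by
  have hβ : Function.Injective fun i : Fin n => betaNum lam i := fun i j h =>
    Fin.val_injective ((betaNum_strictAntiOn lam).injOn i.isLt j.isLt h)
  refine ⟨⟨⟨principalHooksFrom lam 1, ?_, sum_principalHooks⟩, rfl, ?_⟩, fun m hm hmn => ?_⟩
  · intro x hx
    obtain ⟨i, -, rfl⟩ := Multiset.mem_map.mp hx
    unfold hookLen; omega
  · rw [charValue_eq_frobeniusCoeff]
    exact abs_frobeniusCoeff_principalHooksFrom (Nat.zero_le _) hβ coe_betaAfter_zero.symm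
  · rw [charValue_eq_frobeniusCoeff]
    exact frobeniusCoeff_cons_eq_zero_of_hookLen_lt hm hmn (Multiset.replicate (n - m) 1)
end
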